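/- arXiv:1308.5737 — 10 statements merged into one kernel-verified Lean document; each statement's English description precedes it below -/
import Mathlib

section
/- Let A be a finite field, S, S̄ ⊆ A with |S| = |S̄|, ψ: A → S and ψ̄: A → S̄ surjective with ψ̄ additive, and f: A → A, h: S → S̄ with ψ̄ ∘ f = h ∘ ψ. If g: S → A satisfies ψ̄(g(ψ(x))) = 0 for every x ∈ A, then p(x) = f(x) + g(ψ(x)) permutes A if and only if f permutes A. -/
/-!
Since `ψ̄` is additive and kills `g ∘ ψ`, both `p` and `f` satisfy `ψ̄ ∘ F = h ∘ ψ`. If either of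
them is surjective, then `h` maps `range ψ ⊆ S` onto `range ψ̄ ⊇ S̄`, and `|S| = |S̄|` forces `h` to
be injective on `range ψ`. Hence `F x = F y` implies `ψ x = ψ y`, and on a fibre of `ψ` the maps
`p` and `f` differ by the constant `g (ψ x)`, so injectivity passes from one map to the other.
-/

open Function Set

section

variable {α β σ τ : Type*} {ψ : α → σ} {φ : β → τ} {h : σ → τ}

theorem injOn_range_of_comp_eq_of_surjective {S : Set σ} {Sb : Set τ} (hS : S.Finite)
    (hcard : S.ncard = Sb.ncard) (hψ : range ψ ⊆ S) (hφ : Sb ⊆ range φ) {F : α → β}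
    (hcomm : φ ∘ F = h ∘ ψ) (hF : Surjective F) : InjOn h (range ψ) := by
  have hrange : range φ = h '' range ψ := by
    rw [← hF.range_comp, hcomm, range_comp]
  have hfin : (range ψ).Finite := hS.subset hψ
  refine injOn_of_ncard_image_eq (le_antisymm (ncard_image_le hfin) ?_) hfin
  calc (range ψ).ncard ≤ S.ncard := ncard_le_ncard hψ hS
    _ = Sb.ncard := hcard
    _ ≤ (range φ).ncard := ncard_le_ncard hφ (hrange ▸ hfin.image h)
    _ = (h '' range ψ).ncard := by rw [hrange]

theorem injective_of_bijective_of_comp_eq [Finite α] {S : Set σ} {Sb : Set τ} (hS : S.Finite)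
    (hcard : S.ncard = Sb.ncard) (hψ : range ψ ⊆ S) (hφ : Sb ⊆ range φ) {F G : α → β}
    (hFc : φ ∘ F = h ∘ ψ) (hGc : φ ∘ G = h ∘ ψ) (hF : Bijective F)
    (hFG : ∀ x y, ψ x = ψ y → G x = G y → F x = F y) : Injective G := by
  have hinj := injOn_range_of_comp_eq_of_surjective hS hcard hψ hφ hFc hF.2
  intro x y hxy
  have hψxy : ψ x = ψ y := hinj (mem_range_self x) (mem_range_self y) <|
    calc h (ψ x) = φ (G x) := (congrFun hGc x).symm
      _ = φ (G y) := by rw [hxy]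
      _ = h (ψ y) := congrFun hGc y
  exact hF.1 (hFG x y hψxy hxy)

end

theorem stmt_3_general {A : Type} [Field A] [Fintype A] (S Sb : Set A)
    (hcard : S.ncard = Sb.ncard)
    (ψ ψb : A → A) (hψ : ∀ x, ψ x ∈ S)
    (hψbsurj : ∀ s ∈ Sb, ∃ x, ψb x = s)
    (hadd : ∀ x y, ψb (x + y) = ψb x + ψb y)
    (f : A → A) (h : A → A) (hcomm : ∀ x, ψb (f x) = h (ψ x))
    (g : A → A) (hg : ∀ x, ψb (g (ψ x)) = 0) :
    Function.Bijective (fun x => f x + g (ψ x)) ↔ Function.Bijective f := by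
  have hrange : range ψ ⊆ S := range_subset_iff.2 hψ
  have hrangeb : Sb ⊆ range ψb := fun s hs => hψbsurj s hs
  have hfc : ψb ∘ f = h ∘ ψ := funext hcomm
  have hpc : ψb ∘ (fun x => f x + g (ψ x)) = h ∘ ψ := funext fun x => by
    simp only [comp_apply, hadd, hg, add_zero, hcomm]
  constructor
  · intro hp
    refine Finite.injective_iff_bijective.1 <|
      injective_of_bijective_of_comp_eq S.toFinite hcard hrange hrangeb hpc hfc hp ?_
    intro x y hψxy hfxy
    simp only [hfxy, hψxy]
  · intro hf
    refine Finite.injective_iff_bijective.1 <|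
      injective_of_bijective_of_comp_eq S.toFinite hcard hrange hrangeb hfc hpc hf ?_
    intro x y hψxy hpxy
    simpa only [hψxy, add_left_inj] using hpxy

theorem stmt_3 {A : Type} [Field A] [Fintype A] (S Sb : Set A)
    (hcard : S.ncard = Sb.ncard)
    (ψ ψb : A → A) (hψ : ∀ x, ψ x ∈ S) (hψsurj : ∀ s ∈ S, ∃ x, ψ x = s)
    (hψb : ∀ x, ψb x ∈ Sb) (hψbsurj : ∀ s ∈ Sb, ∃ x, ψb x = s)
    (hadd : ∀ x y, ψb (x + y) = ψb x + ψb y)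
    (f : A → A) (h : A → A) (hcomm : ∀ x, ψb (f x) = h (ψ x))
    (g : A → A) (hg : ∀ x, ψb (g (ψ x)) = 0) :
    Function.Bijective (fun x => f x + g (ψ x)) ↔ Function.Bijective f :=
  stmt_3_general S Sb hcard ψ ψb hψ hψbsurj hadd f h hcomm g hg
end

section
/- Let A be a finite field, S, S̄ ⊆ A with |S| = |S̄|, ψ: A → S and ψ̄: A → S̄ surjective with ψ̄ additive. Let u, v: A → A and h: S → S̄ be maps such that ψ̄ ∘ (u + v) = h ∘ ψ. Assume ψ̄(v(x)) = 0 for every x ∈ A and v is constant on each fiber ψ⁻¹(s) for all s ∈ S. Then the map f(x) = u(x) + v(x) permutes A if and only if u permutes A. -/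
theorem stmt_4 {A : Type} [Field A] [Fintype A] (S Sb : Set A)
    (hcard : S.ncard = Sb.ncard)
    (ψ ψb : A → A) (hψ : ∀ x, ψ x ∈ S) (hψsurj : ∀ s ∈ S, ∃ x, ψ x = s)
    (hψb : ∀ x, ψb x ∈ Sb) (hψbsurj : ∀ s ∈ Sb, ∃ x, ψb x = s)
    (hadd : ∀ x y, ψb (x + y) = ψb x + ψb y)
    (u v : A → A) (h : A → A) (hcomm : ∀ x, ψb (u x + v x) = h (ψ x))
    (hv0 : ∀ x, ψb (v x) = 0)
    (hvconst : ∀ x y, ψ x = ψ y → v x = v y) :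
    Function.Bijective (fun x => u x + v x) ↔ Function.Bijective u := by
  classical
  have key : ∀ w : A → A, (∀ x, ψb (w x) = h (ψ x)) → Function.Bijective w →
      ∀ x y : A, h (ψ x) = h (ψ y) → ψ x = ψ y := by
    intro w hw hwbij
    have hmem : ∀ s : S, h s ∈ Sb := by
      rintro ⟨s, hs⟩
      obtain ⟨x, rfl⟩ := hψsurj s hs
      rw [← hw x]; exact hψb _
    set H : S → Sb := fun s => ⟨h s, hmem s⟩ with hH
    have hsurj : Function.Surjective H := by
      rintro ⟨sb, hsb⟩
      obtain ⟨y, rfl⟩ := hψbsurj sb hsb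
      obtain ⟨x, rfl⟩ := hwbij.2 y
      exact ⟨⟨ψ x, hψ x⟩, Subtype.ext (hw x).symm⟩
    have hcard' : Fintype.card S = Fintype.card Sb := by
      rw [← Nat.card_eq_fintype_card, ← Nat.card_eq_fintype_card,
        Nat.card_coe_set_eq, Nat.card_coe_set_eq, hcard]
    have hbij : Function.Bijective H :=
      (Fintype.bijective_iff_surjective_and_card H).2 ⟨hsurj, hcard'⟩
    intro x y hxy
    have := hbij.1 (a₁ := ⟨ψ x, hψ x⟩) (a₂ := ⟨ψ y, hψ y⟩) (Subtype.ext hxy)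
    exact congrArg Subtype.val this
  have huψ : ∀ x, ψb (u x) = h (ψ x) := by
    intro x
    rw [← hcomm x, hadd, hv0, add_zero]
  constructor
  · intro hf
    have hinj : Function.Injective u := by
      intro x y hxy
      have h1 : h (ψ x) = h (ψ y) := by rw [← huψ, ← huψ, hxy]
      have h2 : ψ x = ψ y := key (fun x => u x + v x) hcomm hf x y h1
      have h3 : v x = v y := hvconst x y h2
      have h4 : u x + v x = u y + v y := by rw [hxy, h3]
      exact hf.1 h4
    exact Finite.injective_iff_bijective.1 hinj
  · intro hu
    have hinj : Function.Injective (fun x => u x + v x) := by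
      intro x y hxy
      simp only at hxy
      have h1 : h (ψ x) = h (ψ y) := by rw [← hcomm, ← hcomm, hxy]
      have h2 : ψ x = ψ y := key u huψ hu x y h1
      have h3 : v x = v y := hvconst x y h2
      rw [h3] at hxy
      exact hu.1 (add_right_cancel hxy)
    exact Finite.injective_iff_bijective.1 hinj
end

section
/- Let q be a prime power, n a positive integer, g a polynomial over F_{q^n} such that g(x)^q = g(x) for every x ∈ F_{q^n}, and L ∈ F_q[x] a linearized polynomial (q-polynomial with coefficients in F_q). Then for every δ ∈ F_{q^n}, the polynomial f(x) = g(x^q − x + δ) + L(x) permutes F_{q^n} if and only if L permutes F_{q^n}. -/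
/-!
Write `T x = x ^ q - x` and `f x = g (T x + δ) + L x`. Since `#F = q ^ n` forces characteristic
`p`, the map `x ↦ x ^ q` is additive; it fixes the values of `g` and commutes with the additive
map `L`, so `T ∘ f = L ∘ T`. If `L` is injective, then `f x = f y` gives `T x = T y`, hence
`L x = L y` and `x = y`. Conversely, if `f` is bijective, `L` maps the finite set `T(F)` onto
itself and is therefore injective on it; for `c ∈ ker L` this gives `T c = 0`, so `f c = f 0`
and `c = 0`.
-/

open Function

section Perturbation

variable {A : Type*} [AddCommGroup A] {φ L : A →+ A} {G : A → A}

theorem map_perturbation_sub (hφL : ∀ x, φ (L x) = L (φ x)) (hG : ∀ y, φ (G y) = G y)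
    (δ x : A) :
    φ (G (φ x - x + δ) + L x) - (G (φ x - x + δ) + L x) = L (φ x - x) := by
  rw [map_add, hG, hφL, map_sub]
  abel

theorem injective_perturbation_of_injective (hφL : ∀ x, φ (L x) = L (φ x))
    (hG : ∀ y, φ (G y) = G y) (δ : A) (hL : Injective L) :
    Injective (fun x => G (φ x - x + δ) + L x) := by
  intro x y hxy
  have hsub : φ x - x = φ y - y := hL <| by
    simpa only [map_perturbation_sub hφL hG δ] using congrArg (fun z => φ z - z) hxy
  simp only [hsub, add_right_inj] at hxy
  exact hL hxy

theorem injective_of_bijective_perturbation [Finite A] (hφL : ∀ x, φ (L x) = L (φ x))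
    (hG : ∀ y, φ (G y) = G y) (δ : A) (hf : Bijective (fun x => G (φ x - x + δ) + L x)) :
    Injective L := by
  set f := fun x => G (φ x - x + δ) + L x
  set S := Set.range (fun x => φ x - x)
  have hLS : L '' S = S := by
    ext y
    constructor
    · rintro ⟨_, ⟨x, rfl⟩, rfl⟩
      exact ⟨f x, map_perturbation_sub hφL hG δ x⟩
    · rintro ⟨z, rfl⟩
      obtain ⟨x, rfl⟩ := hf.surjective z
      exact ⟨_, ⟨x, rfl⟩, (map_perturbation_sub hφL hG δ x).symm⟩
  have hinj : Set.InjOn L S :=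
    ((Set.toFinite S).surjOn_iff_bijOn_of_mapsTo (Set.mapsTo_iff_image_subset.mpr hLS.subset)).mp
      hLS.symm.subset |>.injOn
  rw [injective_iff_map_eq_zero]
  intro c hc
  have hfix : φ c - c = 0 :=
    hinj ⟨c, rfl⟩ ⟨0, by simp⟩ (by simp only [map_sub, ← hφL, hc, map_zero, sub_zero])
  exact hf.injective (by simp [f, hfix, hc])

theorem bijective_perturbation_iff [Finite A] (hφL : ∀ x, φ (L x) = L (φ x))
    (hG : ∀ y, φ (G y) = G y) (δ : A) :
    Bijective (fun x => G (φ x - x + δ) + L x) ↔ Bijective L := by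
  simp only [← Finite.injective_iff_bijective]
  exact ⟨fun hf => injective_of_bijective_perturbation hφL hG δ
      (Finite.injective_iff_bijective.mp hf),
    injective_perturbation_of_injective hφL hG δ⟩

end Perturbation

section Linearized

variable (R : Type*) [CommSemiring R] (p e : ℕ) [ExpChar R p] {m : ℕ}

noncomputable def linearizedMap (a : Fin m → R) : R →+ R :=
  ∑ i, (AddMonoidHom.mulLeft (a i)).comp (iterateFrobenius R p (e * i)).toAddMonoidHom

variable {R p e}

theorem linearizedMap_apply (a : Fin m → R) (x : R) :
    linearizedMap R p e a x = ∑ i : Fin m, a i * x ^ (p ^ e) ^ (i : ℕ) := by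
  simp [linearizedMap, iterateFrobenius_def, pow_mul]

theorem iterateFrobenius_linearizedMap {a : Fin m → R} (ha : ∀ i, a i ^ p ^ e = a i) (x : R) :
    iterateFrobenius R p e (linearizedMap R p e a x) =
      linearizedMap R p e a (iterateFrobenius R p e x) := by
  simp only [linearizedMap_apply, map_sum, map_mul, iterateFrobenius_def, ha, ← pow_mul,
    mul_comm]

end Linearized

theorem stmt_5_general (p e : ℕ) [Fact p.Prime] (q : ℕ) (hq : q = p ^ e)
    (F : Type) [Field F] [Fintype F] (n : ℕ)
    (hF : Fintype.card F = q ^ n)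
    (g : Polynomial F) (hg : ∀ x : F, (g.eval x) ^ q = g.eval x)
    (m : ℕ) (a : Fin m → F) (ha : ∀ i, (a i) ^ q = a i)
    (L : F → F) (hL : ∀ x, L x = ∑ i : Fin m, a i * x ^ q ^ (i : ℕ))
    (δ : F) :
    Function.Bijective (fun x => g.eval (x ^ q - x + δ) + L x) ↔
      Function.Bijective L := by
  subst hq
  have : CharP F p := charP_of_card_eq_prime_pow (hF.trans (pow_mul p e n).symm)
  obtain rfl : L = linearizedMap F p e a :=
    funext fun x => (hL x).trans (linearizedMap_apply a x).symm
  exact bijective_perturbation_iff (φ := (iterateFrobenius F p e).toAddMonoidHom)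
    (iterateFrobenius_linearizedMap ha) hg δ

theorem stmt_5 (p e : ℕ) [Fact p.Prime] (he : 0 < e) (q : ℕ) (hq : q = p ^ e)
    (F : Type) [Field F] [Fintype F] (n : ℕ) (hn : 0 < n)
    (hF : Fintype.card F = q ^ n)
    (g : Polynomial F) (hg : ∀ x : F, (g.eval x) ^ q = g.eval x)
    (m : ℕ) (a : Fin m → F) (ha : ∀ i, (a i) ^ q = a i)
    (L : F → F) (hL : ∀ x, L x = ∑ i : Fin m, a i * x ^ q ^ (i : ℕ))
    (δ : F) :
    Function.Bijective (fun x => g.eval (x ^ q - x + δ) + L x) ↔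
      Function.Bijective L :=
  stmt_5_general p e q hq F n hF g hg m a ha L hL δ
end

section
/- Let q be a prime power, n = 2k, t even, s a nonnegative integer, β ∈ F_{q^k}, γ ∈ F_q with γ ≠ 0, and δ ∈ F_{q^n} with δ^{q^k} = −δ. Then f(x) = (x^{q^k} − x + δ)^t + β·Tr(x) + γ·x^{q^s} is a permutation polynomial of F_{q^n} if and only if Tr(β γ⁻¹) + 1 ≠ 0. -/
/-!
Write `σ x = x^{q^k}`, an involution of `𝔽_{q^{2k}}`. Since `σ` negates `x^{q^k} - x + δ` and `t`
is even, and `β`, `γ`, `Tr x` are `σ`-fixed, `σ(f x) - f x = γ (σ x - x)^{q^s}`. Hence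
`f x = f y` forces `σ x - x = σ y - y`, so the first summands agree and `d = x - y` satisfies
`β Tr d + γ d^{q^s} = 0`. Taking traces gives `Tr d · (Tr(β/γ) + 1) = 0`, so `Tr d = 0` and
`d = 0`. Conversely, if `Tr(β/γ) = -1`, the `d` with `d^{q^s} = -β/γ` is `σ`-fixed with
`Tr d = 1`, and `f d = f 0`.
-/

open Finset Function

section FrobeniusPower

variable {R : Type*} {p e q : ℕ}

lemma pow_pow_eq_pow_pow_mul [Monoid R] (hq : q = p ^ e) (m : ℕ) (x : R) :
    x ^ q ^ m = x ^ p ^ (e * m) := by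
  rw [hq, ← pow_mul]

lemma add_pow_pow_of_eq_pow [CommSemiring R] [ExpChar R p] (hq : q = p ^ e) (m : ℕ) (x y : R) :
    (x + y) ^ q ^ m = x ^ q ^ m + y ^ q ^ m := by
  simp only [pow_pow_eq_pow_pow_mul hq, add_pow_expChar_pow]

lemma sub_pow_pow_of_eq_pow [CommRing R] [ExpChar R p] (hq : q = p ^ e) (m : ℕ) (x y : R) :
    (x - y) ^ q ^ m = x ^ q ^ m - y ^ q ^ m := by
  simp only [pow_pow_eq_pow_pow_mul hq, sub_pow_expChar_pow]

lemma zero_pow_pow_of_eq_pow [Semiring R] [ExpChar R p] (hq : q = p ^ e) (m : ℕ) :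
    (0 : R) ^ q ^ m = 0 := by
  rw [pow_pow_eq_pow_pow_mul hq, zero_pow (expChar_pow_pos R p _).ne']

lemma neg_pow_pow_of_eq_pow [CommRing R] [ExpChar R p] (hq : q = p ^ e) (m : ℕ) (x : R) :
    (-x) ^ q ^ m = -x ^ q ^ m := by
  rw [neg_pow, pow_pow_eq_pow_pow_mul hq, neg_one_pow_expChar_pow, neg_one_mul]

lemma sum_pow_pow_of_eq_pow [CommSemiring R] [ExpChar R p] (hq : q = p ^ e) (m : ℕ)
    {ι : Type*} (S : Finset ι) (f : ι → R) :
    (∑ i ∈ S, f i) ^ q ^ m = ∑ i ∈ S, f i ^ q ^ m := by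
  simp only [pow_pow_eq_pow_pow_mul hq, sum_pow_char_pow]

lemma pow_pow_injective_of_eq_pow [CommRing R] [IsReduced R] [ExpChar R p] (hq : q = p ^ e)
    (m : ℕ) : Injective fun x : R => x ^ q ^ m := by
  simp only [pow_pow_eq_pow_pow_mul hq]
  exact iterateFrobenius_inj R p (e * m)

end FrobeniusPower

lemma pow_pow_eq_self_of_pow_eq_self {M : Type*} [Monoid M] {a : M} {q : ℕ} (ha : a ^ q = a)
    (m : ℕ) : a ^ q ^ m = a := by
  induction m with
  | zero => rw [pow_zero, pow_one]
  | succ m ih => rw [pow_succ, pow_mul, ih, ha]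

def frobTrace {R : Type*} [Semiring R] (q n : ℕ) (x : R) : R :=
  ∑ i ∈ range n, x ^ q ^ i

namespace frobTrace

variable {R : Type*} [CommRing R] {p e q n : ℕ}

lemma sub [ExpChar R p] (hq : q = p ^ e) (x y : R) :
    frobTrace q n (x - y) = frobTrace q n x - frobTrace q n y := by
  simp only [frobTrace, sub_pow_pow_of_eq_pow hq, sum_sub_distrib]

lemma zero [ExpChar R p] (hq : q = p ^ e) : frobTrace q n (0 : R) = 0 := by
  simp only [frobTrace, zero_pow_pow_of_eq_pow hq, sum_const_zero]

lemma neg [ExpChar R p] (hq : q = p ^ e) (x : R) : frobTrace q n (-x) = -frobTrace q n x := by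
  simp only [frobTrace, neg_pow_pow_of_eq_pow hq, sum_neg_distrib]

lemma mul_of_pow_eq_self {a : R} (ha : a ^ q = a) (x : R) :
    frobTrace q n (a * x) = a * frobTrace q n x := by
  simp only [frobTrace, mul_pow, pow_pow_eq_self_of_pow_eq_self ha, mul_sum]

lemma pow_eq_self {x : R} (hx : x ^ q ^ n = x) : frobTrace q n (x ^ q) = frobTrace q n x := by
  have hshift := sum_range_succ' (fun i => x ^ q ^ i) n
  rw [sum_range_succ, hx, pow_zero, pow_one, add_left_inj] at hshift
  simp only [frobTrace, ← pow_mul, ← pow_succ']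
  exact hshift.symm

lemma pow_pow_eq_self (hR : ∀ x : R, x ^ q ^ n = x) (m : ℕ) (x : R) :
    frobTrace q n (x ^ q ^ m) = frobTrace q n x := by
  induction m with
  | zero => rw [pow_zero, pow_one]
  | succ m ih => rw [pow_succ, pow_mul, pow_eq_self (hR _), ih]

lemma pow_eq_self_of_eq_pow [ExpChar R p] (hq : q = p ^ e) (hR : ∀ x : R, x ^ q ^ n = x)
    (x : R) : frobTrace q n x ^ q = frobTrace q n x := by
  have hpow : frobTrace q n x ^ q = frobTrace q n (x ^ q) := by
    simpa only [frobTrace, pow_one, ← pow_mul, mul_comm] using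
      sum_pow_pow_of_eq_pow (R := R) hq 1 (range n) (fun i => x ^ q ^ i)
  rw [hpow, pow_eq_self (hR x)]

end frobTrace

section PermutationPolynomial

variable {F : Type*} [Field F] {p e q k : ℕ}

lemma pow_pow_pow_pow_eq_self (hF : ∀ x : F, x ^ q ^ (2 * k) = x) (x : F) :
    (x ^ q ^ k) ^ q ^ k = x := by
  rw [← pow_mul, ← pow_add, ← two_mul, hF]

-- `x ↦ x^{q^k}` is an involution negating `x^{q^k} - x + δ`.
lemma sub_add_pow_even_pow_pow_eq_self [ExpChar F p] (hq : q = p ^ e)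
    (hF : ∀ x : F, x ^ q ^ (2 * k) = x) {δ : F} (hδ : δ ^ q ^ k = -δ) {t : ℕ} (ht : Even t)
    (x : F) : ((x ^ q ^ k - x + δ) ^ t) ^ q ^ k = (x ^ q ^ k - x + δ) ^ t := by
  have hneg : (x ^ q ^ k - x + δ) ^ q ^ k = -(x ^ q ^ k - x + δ) := by
    rw [add_pow_pow_of_eq_pow hq, sub_pow_pow_of_eq_pow hq, hδ, pow_pow_pow_pow_eq_self hF]
    ring
  rw [← pow_right_comm, hneg, ht.neg_pow]

def permPoly (q k t s : ℕ) (β γ δ x : F) : F :=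
  (x ^ q ^ k - x + δ) ^ t + β * frobTrace q (2 * k) x + γ * x ^ q ^ s

lemma permPoly_pow_pow_sub_self [ExpChar F p] (hq : q = p ^ e)
    (hF : ∀ x : F, x ^ q ^ (2 * k) = x) {β γ δ : F} (hβ : β ^ q ^ k = β) (hγq : γ ^ q = γ)
    (hδ : δ ^ q ^ k = -δ) {t : ℕ} (ht : Even t) (s : ℕ) (x : F) :
    permPoly q k t s β γ δ x ^ q ^ k - permPoly q k t s β γ δ x =
      γ * (x ^ q ^ k - x) ^ q ^ s := by
  have hTr := frobTrace.pow_eq_self_of_eq_pow hq hF x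
  rw [permPoly, add_pow_pow_of_eq_pow hq, add_pow_pow_of_eq_pow hq, mul_pow, mul_pow,
    sub_add_pow_even_pow_pow_eq_self hq hF hδ ht, hβ, pow_pow_eq_self_of_pow_eq_self hTr,
    pow_pow_eq_self_of_pow_eq_self hγq, pow_right_comm, sub_pow_pow_of_eq_pow hq]
  ring

lemma eq_zero_of_mul_frobTrace_add_mul_pow_pow_eq_zero [ExpChar F p] (hq : q = p ^ e) {n : ℕ}
    (hF : ∀ x : F, x ^ q ^ n = x) {β γ : F} (hγ : γ ≠ 0)
    (hβγ : frobTrace q n (β * γ⁻¹) + 1 ≠ 0) {s : ℕ} {d : F}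
    (hd : β * frobTrace q n d + γ * d ^ q ^ s = 0) : d = 0 := by
  have hds : d ^ q ^ s = -(frobTrace q n d * (β * γ⁻¹)) := by
    field_simp
    linear_combination hd
  have htr : frobTrace q n d * (frobTrace q n (β * γ⁻¹) + 1) = 0 := by
    have h := frobTrace.pow_pow_eq_self hF s d
    rw [hds, frobTrace.neg hq,
      frobTrace.mul_of_pow_eq_self (frobTrace.pow_eq_self_of_eq_pow hq hF d)] at h
    linear_combination -h
  have hTd : frobTrace q n d = 0 := (mul_eq_zero.1 htr).resolve_right hβγ
  rw [hTd, zero_mul, neg_zero] at hds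
  exact pow_pow_injective_of_eq_pow hq s (hds.trans (zero_pow_pow_of_eq_pow hq s).symm)

lemma permPoly_injective [ExpChar F p] (hq : q = p ^ e) (hF : ∀ x : F, x ^ q ^ (2 * k) = x)
    {β γ δ : F} (hβ : β ^ q ^ k = β) (hγq : γ ^ q = γ) (hγ : γ ≠ 0) (hδ : δ ^ q ^ k = -δ)
    {t : ℕ} (ht : Even t) (s : ℕ) (hβγ : frobTrace q (2 * k) (β * γ⁻¹) + 1 ≠ 0) :
    Injective (permPoly q k t s β γ δ) := by
  intro x y hxy
  have hdiff : x ^ q ^ k - x = y ^ q ^ k - y := by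
    refine pow_pow_injective_of_eq_pow hq s (mul_left_cancel₀ hγ ?_)
    simp only [← permPoly_pow_pow_sub_self hq hF hβ hγq hδ ht, hxy]
  have hlin : β * frobTrace q (2 * k) (x - y) + γ * (x - y) ^ q ^ s = 0 := by
    rw [permPoly, permPoly, hdiff] at hxy
    rw [frobTrace.sub hq, sub_pow_pow_of_eq_pow hq]
    linear_combination hxy
  exact sub_eq_zero.1 (eq_zero_of_mul_frobTrace_add_mul_pow_pow_eq_zero hq hF hγ hβγ hlin)

lemma exists_ne_zero_permPoly_eq_permPoly_zero [Finite F] [ExpChar F p] (hq : q = p ^ e)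
    (hF : ∀ x : F, x ^ q ^ (2 * k) = x) {β γ δ : F} (hβ : β ^ q ^ k = β) (hγq : γ ^ q = γ)
    (hγ : γ ≠ 0) (t s : ℕ) (hβγ : frobTrace q (2 * k) (β * γ⁻¹) + 1 = 0) :
    ∃ d ≠ 0, permPoly q k t s β γ δ d = permPoly q k t s β γ δ 0 := by
  obtain ⟨d, hd : d ^ q ^ s = -(β * γ⁻¹)⟩ :=
    Finite.surjective_of_injective (pow_pow_injective_of_eq_pow hq s) (-(β * γ⁻¹))
  have hTd : frobTrace q (2 * k) d = 1 := by
    rw [← frobTrace.pow_pow_eq_self hF s, hd, frobTrace.neg hq]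
    linear_combination -hβγ
  have hdk : d ^ q ^ k = d := by
    refine pow_pow_injective_of_eq_pow hq s (show (d ^ q ^ k) ^ q ^ s = d ^ q ^ s from ?_)
    rw [pow_right_comm, hd, neg_pow_pow_of_eq_pow hq, mul_pow, hβ, inv_pow,
      pow_pow_eq_self_of_pow_eq_self hγq]
  refine ⟨d, fun hd0 => by simp [hd0, frobTrace.zero hq] at hTd, ?_⟩
  rw [permPoly, permPoly, hdk, hTd, hd, frobTrace.zero hq, zero_pow_pow_of_eq_pow hq,
    zero_pow_pow_of_eq_pow hq]
  field_simp
  ring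

end PermutationPolynomial

theorem stmt_7_general (p e : ℕ) [Fact p.Prime] (q : ℕ) (hq : q = p ^ e)
    (F : Type) [Field F] [Fintype F] (k : ℕ) (n : ℕ) (hn : n = 2 * k)
    (hF : Fintype.card F = q ^ n)
    (t : ℕ) (ht : Even t) (s : ℕ)
    (β : F) (hβ : β ^ q ^ k = β)
    (γ : F) (hγq : γ ^ q = γ) (hγ : γ ≠ 0)
    (δ : F) (hδ : δ ^ q ^ k = -δ)
    (Tr : F → F) (hTr : ∀ x, Tr x = ∑ i ∈ Finset.range n, x ^ q ^ i) :
    Function.Bijective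
        (fun x : F => (x ^ q ^ k - x + δ) ^ t + β * Tr x + γ * x ^ q ^ s) ↔
      Tr (β * γ⁻¹) + 1 ≠ 0 := by
  obtain rfl : Tr = frobTrace q n := funext hTr
  subst hn
  have : CharP F p := charP_of_card_eq_prime_pow (by rw [hF, hq, ← pow_mul])
  have hFrob : ∀ x : F, x ^ q ^ (2 * k) = x := fun x => hF ▸ FiniteField.pow_card x
  change Bijective (permPoly q k t s β γ δ) ↔ _
  rw [← Finite.injective_iff_bijective]
  refine ⟨fun hinj hβγ => ?_, permPoly_injective hq hFrob hβ hγq hγ hδ ht s⟩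
  obtain ⟨d, hd0, hd⟩ :=
    exists_ne_zero_permPoly_eq_permPoly_zero hq hFrob hβ hγq hγ t s hβγ
  exact hd0 (hinj hd)

theorem stmt_7 (p e : ℕ) [Fact p.Prime] (he : 0 < e) (q : ℕ) (hq : q = p ^ e)
    (F : Type) [Field F] [Fintype F] (k : ℕ) (hk : 0 < k) (n : ℕ) (hn : n = 2 * k)
    (hF : Fintype.card F = q ^ n)
    (t : ℕ) (ht : Even t) (s : ℕ)
    (β : F) (hβ : β ^ q ^ k = β)
    (γ : F) (hγq : γ ^ q = γ) (hγ : γ ≠ 0)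
    (δ : F) (hδ : δ ^ q ^ k = -δ)
    (Tr : F → F) (hTr : ∀ x, Tr x = ∑ i ∈ Finset.range n, x ^ q ^ i) :
    Function.Bijective
        (fun x : F => (x ^ q ^ k - x + δ) ^ t + β * Tr x + γ * x ^ q ^ s) ↔
      Tr (β * γ⁻¹) + 1 ≠ 0 :=
  stmt_7_general p e q hq F k n hn hF t ht s β hβ γ hγq hγ δ hδ Tr hTr
end

section
/- Let q be a prime power, n a positive integer, s a nonnegative integer, and c ∈ F_{q^n}. Then the linearized polynomial x^{q^s} + c·Tr(x) permutes F_{q^n} if and only if Tr(c) ≠ −1. -/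
/-!
Since `q ^ n = |F|`, `q` is a power of the characteristic, so `x ↦ x ^ q ^ s` and
`Tr x = ∑_{i<n} x ^ q ^ i` are additive. Moreover `Tr (x ^ q) = Tr x`, and `Tr` is `𝔽_q`-linear
with values in `𝔽_q`, so `Tr (x ^ q ^ s + c * Tr x) = (1 + Tr c) * Tr x`. If `Tr c = -1`, the
image of the additive map `L x = x ^ q ^ s + c * Tr x` lies in the kernel of `Tr`, which is not
all of `F` (as a polynomial, `Tr` has degree `q ^ (n - 1) < |F|`), so `L` is not onto.
Otherwise `L x = 0` forces `Tr x = 0` and then `x ^ q ^ s = 0`, so `L` is injective.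
-/

open Finset Function Polynomial

theorem bijective_add_mul_iff {F : Type*} [Field F] [Finite F] (φ T : F →+ F)
    (hφ : Injective φ) (hTφ : ∀ x, T (φ x) = T x) (hT : ∀ a x, T (a * T x) = T a * T x)
    (hT0 : T ≠ 0) (c : F) :
    Bijective (fun x => φ x + c * T x) ↔ T c ≠ -1 := by
  let L : F →+ F := φ + (AddMonoidHom.mulLeft c).comp T
  have hTL : ∀ x, T (L x) = (1 + T c) * T x := fun x => by
    simp only [L, AddMonoidHom.add_apply, AddMonoidHom.comp_apply, AddMonoidHom.coe_mulLeft,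
      map_add, hTφ, hT]
    ring
  change Bijective L ↔ _
  constructor
  · rintro hL hc
    refine hT0 (AddMonoidHom.ext fun y => ?_)
    obtain ⟨x, rfl⟩ := hL.surjective y
    simp [hTL, hc]
  · intro hc
    refine Finite.injective_iff_bijective.mp ((injective_iff_map_eq_zero L).mpr fun x hx => ?_)
    have hTx : T x = 0 := by
      have h := hTL x
      rw [hx, map_zero, zero_eq_mul] at h
      exact h.resolve_left fun h1 => hc (by linear_combination h1)
    have hφx : φ x = 0 := by simpa [L, hTx] using hx
    exact (injective_iff_map_eq_zero φ).mp hφ x hφx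

theorem exists_eq_ringChar_pow_of_card_eq_pow {F : Type*} [Field F] [Fintype F] {q n : ℕ}
    (hF : Fintype.card F = q ^ n) : ∃ e, q = ringChar F ^ e := by
  obtain ⟨m, hp, hcard⟩ := FiniteField.card F (ringChar F)
  have hn : n ≠ 0 := by
    rintro rfl
    exact (Fintype.one_lt_card (α := F)).ne' (by simpa using hF)
  obtain ⟨e, -, he⟩ := (Nat.dvd_prime_pow hp).mp (hcard ▸ hF ▸ dvd_pow_self q hn)
  exact ⟨e, he⟩

theorem pow_pow_eq_self_of_pow_eq {M : Type*} [Monoid M] {t : M} {q : ℕ} (ht : t ^ q = t)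
    (i : ℕ) : t ^ q ^ i = t := by
  induction i with
  | zero => simp
  | succ i ih => rw [pow_succ, pow_mul, ih, ht]

theorem exists_sum_pow_pow_ne_zero {R : Type*} [CommRing R] [IsDomain R] [Fintype R] {q n : ℕ}
    (hq : 1 < q) (hn : n ≠ 0) (hR : q ^ (n - 1) < Fintype.card R) :
    ∃ a : R, ∑ i ∈ range n, a ^ q ^ i ≠ 0 := by
  let P : R[X] := ∑ i ∈ range n, X ^ q ^ i
  have hP : P.coeff 1 = 1 := by
    simp [P, coeff_X_pow, eq_comm (a := 1), hq.ne', Nat.pos_of_ne_zero hn]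
  have hdeg : P.natDegree ≤ q ^ (n - 1) :=
    natDegree_sum_le_of_forall_le _ _ fun i hi => by
      rw [natDegree_X_pow]
      exact Nat.pow_le_pow_right hq.le (by have := mem_range.mp hi; omega)
  obtain ⟨a, ha⟩ := P.exists_eval_ne_zero_of_natDegree_lt_card (fun h => by simp [h] at hP)
    (by rw [Cardinal.mk_fintype]; exact_mod_cast hdeg.trans_lt hR)
  exact ⟨a, by simpa [P, eval_finsetSum] using ha⟩

section PowTrace

variable {R : Type*} [CommSemiring R] (p : ℕ) [ExpChar R p] (e n : ℕ)

/-- The trace of `R` over `𝔽_{p ^ e}` when `R` is a field with `(p ^ e) ^ n` elements. -/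
def powTrace : R →+ R :=
  ∑ i ∈ range n, (iterateFrobenius R p (e * i)).toAddMonoidHom

variable {p e n}

theorem powTrace_apply (x : R) : powTrace p e n x = ∑ i ∈ range n, x ^ (p ^ e) ^ i := by
  simp [powTrace, AddMonoidHom.finsetSum_apply, iterateFrobenius_def, pow_mul]

theorem powTrace_pow_eq_pow_powTrace (x : R) :
    powTrace p e n (x ^ p ^ e) = powTrace p e n x ^ p ^ e := by
  rw [powTrace_apply, powTrace_apply, ← iterateFrobenius_def p e (∑ i ∈ range n, _), map_sum]
  exact sum_congr rfl fun i _ => by rw [iterateFrobenius_def]; ring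

theorem powTrace_mul_of_pow_eq (a : R) {t : R} (ht : t ^ p ^ e = t) :
    powTrace p e n (a * t) = powTrace p e n a * t := by
  simp only [powTrace_apply, sum_mul, mul_pow, pow_pow_eq_self_of_pow_eq ht]

variable {F : Type*} [Field F] [Fintype F] [ExpChar F p]

theorem powTrace_pow (hF : Fintype.card F = (p ^ e) ^ n) (x : F) :
    powTrace p e n (x ^ p ^ e) = powTrace p e n x := by
  have hfix : x ^ (p ^ e) ^ n = x := hF ▸ FiniteField.pow_card x
  have h := (sum_range_succ' (fun i => x ^ (p ^ e) ^ i) n).symm.trans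
    (sum_range_succ (fun i => x ^ (p ^ e) ^ i) n)
  simp only [hfix, pow_zero, pow_one, add_left_inj] at h
  rw [powTrace_apply, powTrace_apply, ← h]
  exact sum_congr rfl fun i _ => by rw [← pow_mul, ← pow_succ']

theorem powTrace_pow_pow (hF : Fintype.card F = (p ^ e) ^ n) (x : F) (s : ℕ) :
    powTrace p e n (x ^ (p ^ e) ^ s) = powTrace p e n x := by
  induction s with
  | zero => simp
  | succ s ih => rw [pow_succ, pow_mul, powTrace_pow hF, ih]

theorem powTrace_apply_pow (hF : Fintype.card F = (p ^ e) ^ n) (x : F) :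
    powTrace p e n x ^ p ^ e = powTrace p e n x := by
  rw [← powTrace_pow_eq_pow_powTrace, powTrace_pow hF]

theorem powTrace_mul_powTrace (hF : Fintype.card F = (p ^ e) ^ n) (a x : F) :
    powTrace p e n (a * powTrace p e n x) = powTrace p e n a * powTrace p e n x :=
  powTrace_mul_of_pow_eq a (powTrace_apply_pow hF x)

theorem powTrace_ne_zero (hF : Fintype.card F = (p ^ e) ^ n) :
    powTrace p e n ≠ (0 : F →+ F) := by
  have hn : n ≠ 0 := by
    rintro rfl
    exact (Fintype.one_lt_card (α := F)).ne' (by simpa using hF)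
  have hq : 1 < p ^ e := (Nat.one_lt_pow_iff hn).mp (hF ▸ Fintype.one_lt_card)
  obtain ⟨a, ha⟩ := exists_sum_pow_pow_ne_zero (R := F) hq hn
    (by rw [hF]; exact Nat.pow_lt_pow_right hq (by omega))
  exact fun h => ha (by rw [← powTrace_apply, h, AddMonoidHom.zero_apply])

end PowTrace

theorem stmt_8_general (q : ℕ)
    (F : Type) [Field F] [Fintype F] (n : ℕ)
    (hF : Fintype.card F = q ^ n) (s : ℕ) (c : F)
    (Tr : F → F) (hTr : ∀ x, Tr x = ∑ i ∈ Finset.range n, x ^ q ^ i) :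
    Function.Bijective (fun x : F => x ^ q ^ s + c * Tr x) ↔ Tr c ≠ -1 := by
  obtain ⟨e, rfl⟩ := exists_eq_ringChar_pow_of_card_eq_pow hF
  have : ExpChar F (ringChar F) := ExpChar.prime (CharP.char_is_prime F _)
  obtain rfl : Tr = powTrace (ringChar F) e n :=
    funext fun x => (hTr x).trans (powTrace_apply x).symm
  let φ := iterateFrobenius F (ringChar F) (e * s)
  have hφ : ∀ x, x ^ (ringChar F ^ e) ^ s = φ x := fun x => by
    rw [iterateFrobenius_def, pow_mul]
  simp only [hφ]
  exact bijective_add_mul_iff φ.toAddMonoidHom _ φ.injective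
    (fun x => (congrArg _ (hφ x).symm).trans (powTrace_pow_pow hF x s))
    (powTrace_mul_powTrace hF) (powTrace_ne_zero hF) c

theorem stmt_8 (p e : ℕ) [Fact p.Prime] (he : 0 < e) (q : ℕ) (hq : q = p ^ e)
    (F : Type) [Field F] [Fintype F] (n : ℕ) (hn : 0 < n)
    (hF : Fintype.card F = q ^ n) (s : ℕ) (c : F)
    (Tr : F → F) (hTr : ∀ x, Tr x = ∑ i ∈ Finset.range n, x ^ q ^ i) :
    Function.Bijective (fun x : F => x ^ q ^ s + c * Tr x) ↔ Tr c ≠ -1 :=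
  stmt_8_general q F n hF s c Tr hTr
end

section
/- Let q be an odd prime power, n = 2k, s, t integers, δ ∈ F_{q^k}, γ ∈ F_{q^k}, α, β ∈ F_{q^n} with α^{q^k} = −α and β^{q^k} = −β. Then f(x) = α(x^{q^k} + x + δ)^t + β·Tr(x) + γ·x^{q^s} is a permutation polynomial of F_{q^n} if and only if γ ≠ 0. -/
/-!
Let `σ x = x ^ q ^ k`, an involution of `F`. The polynomial has the shape
`f x = G (σ x + x) + γ * x ^ q ^ s`, where `G` sends `σ`-fixed elements to `σ`-anti-fixed ones
(because `α, β` are anti-fixed, `δ` is fixed and `Tr x = ∑_{i<k} (σ x + x) ^ q ^ i`).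
Hence `f x + σ (f x) = γ * (x + σ x) ^ q ^ s`. If `γ = 0` every value of `f` is anti-fixed, so
`1` is not a value since `2 ≠ 0`. If `γ ≠ 0`, then `f x = f y` first forces `x + σ x = y + σ y`,
hence `G (σ x + x) = G (σ y + y)`, and then `x ^ q ^ s = y ^ q ^ s`.
-/

open Finset Function

section Involution

variable {F : Type*} [Field F] (σ φ : F →+* F) (G : F → F) (γ : F)

theorem add_map_apply_eq_mul_map (hσ : ∀ x, σ (σ x) = x) (hσφ : ∀ x, σ (φ x) = φ (σ x))
    (hG : ∀ y, σ y = y → σ (G y) = -G y) (hγ : σ γ = γ) (x : F) :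
    (G (σ x + x) + γ * φ x) + σ (G (σ x + x) + γ * φ x) = γ * φ (σ x + x) := by
  have hfix : σ (σ x + x) = σ x + x := by rw [map_add, hσ, add_comm]
  rw [map_add, map_mul, hG _ hfix, hγ, hσφ, map_add]
  ring

theorem injective_add_mul_map_of_ne_zero (hσ : ∀ x, σ (σ x) = x) (hσφ : ∀ x, σ (φ x) = φ (σ x))
    (hG : ∀ y, σ y = y → σ (G y) = -G y) (hγ : σ γ = γ) (hγ0 : γ ≠ 0) :
    Injective fun x => G (σ x + x) + γ * φ x := by
  intro x y hxy
  have hsum : σ x + x = σ y + y := by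
    apply φ.injective
    apply mul_left_cancel₀ hγ0
    simp only at hxy
    rw [← add_map_apply_eq_mul_map σ φ G γ hσ hσφ hG hγ, hxy,
      add_map_apply_eq_mul_map σ φ G γ hσ hσφ hG hγ]
  simp only [hsum, add_right_inj] at hxy
  exact φ.injective (mul_left_cancel₀ hγ0 hxy)

theorem not_surjective_of_map_fixed_eq_neg (hσ : ∀ x, σ (σ x) = x)
    (hG : ∀ y, σ y = y → σ (G y) = -G y) (h2 : (2 : F) ≠ 0) :
    ¬Surjective fun x => G (σ x + x) := by
  intro hsurj
  obtain ⟨x, hx⟩ := hsurj 1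
  have hfix : σ (σ x + x) = σ x + x := by rw [map_add, hσ, add_comm]
  have h := hG _ hfix
  simp only at hx
  rw [hx, map_one] at h
  exact h2 (by linear_combination h)

theorem bijective_add_mul_map_iff_ne_zero [Finite F] (hσ : ∀ x, σ (σ x) = x)
    (hσφ : ∀ x, σ (φ x) = φ (σ x)) (hG : ∀ y, σ y = y → σ (G y) = -G y) (hγ : σ γ = γ)
    (h2 : (2 : F) ≠ 0) :
    Bijective (fun x => G (σ x + x) + γ * φ x) ↔ γ ≠ 0 := by
  refine ⟨fun hbij hγ0 => ?_, fun hγ0 => ?_⟩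
  · subst hγ0
    simp only [zero_mul, add_zero] at hbij
    exact not_surjective_of_map_fixed_eq_neg σ G hσ hG h2 hbij.2
  · exact Finite.injective_iff_bijective.mp
      (injective_add_mul_map_of_ne_zero σ φ G γ hσ hσφ hG hγ hγ0)

end Involution

section Frobenius

variable {R : Type*} [CommSemiring R] (p : ℕ) [ExpChar R p]

theorem add_pow_expChar_pow_pow (e i : ℕ) (x y : R) :
    (x + y) ^ (p ^ e) ^ i = x ^ (p ^ e) ^ i + y ^ (p ^ e) ^ i := by
  simp only [← pow_mul, add_pow_expChar_pow]

theorem sum_range_two_mul_pow_pow (e k : ℕ) (x : R) :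
    ∑ i ∈ range (2 * k), x ^ (p ^ e) ^ i = ∑ i ∈ range k, (x ^ (p ^ e) ^ k + x) ^ (p ^ e) ^ i := by
  rw [two_mul, sum_range_add, ← sum_add_distrib]
  refine sum_congr rfl fun i _ => ?_
  rw [add_pow_expChar_pow_pow, ← pow_mul x, ← pow_add, add_comm]

end Frobenius

theorem stmt_10_general (p e : ℕ) [Fact p.Prime] (hp : p ≠ 2) (q : ℕ) (hq : q = p ^ e)
    (F : Type) [Field F] [Fintype F] (k : ℕ) (n : ℕ) (hn : n = 2 * k)
    (hF : Fintype.card F = q ^ n)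
    (s t : ℕ)
    (δ : F) (hδ : δ ^ q ^ k = δ)
    (γ : F) (hγ : γ ^ q ^ k = γ)
    (α : F) (hα : α ^ q ^ k = -α)
    (β : F) (hβ : β ^ q ^ k = -β)
    (Tr : F → F) (hTr : ∀ x, Tr x = ∑ i ∈ Finset.range n, x ^ q ^ i) :
    Function.Bijective
        (fun x : F => α * (x ^ q ^ k + x + δ) ^ t + β * Tr x + γ * x ^ q ^ s) ↔
      γ ≠ 0 := by
  subst hq hn
  have : CharP F p := charP_of_card_eq_prime_pow (f := e * (2 * k)) (by rw [hF, ← pow_mul])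
  have h2 : (2 : F) ≠ 0 := Ring.two_ne_zero (by rwa [ringChar.eq F p])
  have hpow (m : ℕ) : ∃ σ : F →+* F, ∀ x, σ x = x ^ (p ^ e) ^ m :=
    ⟨iterateFrobenius F p (e * m), fun x => by rw [iterateFrobenius_def, pow_mul]⟩
  obtain ⟨σ, hσ⟩ := hpow k
  obtain ⟨φ, hφ⟩ := hpow s
  let G : F → F := fun y => α * (y + δ) ^ t + β * ∑ i ∈ range k, y ^ (p ^ e) ^ i
  have hf : (fun x => α * (x ^ (p ^ e) ^ k + x + δ) ^ t + β * Tr x + γ * x ^ (p ^ e) ^ s) =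
      fun x => G (σ x + x) + γ * φ x := by
    funext x
    simp only [G, hσ, hφ, hTr, sum_range_two_mul_pow_pow]
  rw [hf]
  refine bijective_add_mul_map_iff_ne_zero σ φ G γ (fun x => ?_) (fun x => ?_) (fun y hy => ?_) ?_
    h2
  · rw [hσ, hσ, ← pow_mul, ← pow_add, ← two_mul, ← hF, FiniteField.pow_card]
  · rw [hσ, hφ, hφ, hσ, ← pow_mul x, ← pow_mul x, mul_comm]
  · simp only [G, map_add, map_mul, map_pow, map_sum, hy]
    rw [hσ α, hσ β, hσ δ, hα, hβ, hδ]
    ring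
  · rw [hσ, hγ]

theorem stmt_10 (p e : ℕ) [Fact p.Prime] (hp : p ≠ 2) (he : 0 < e) (q : ℕ) (hq : q = p ^ e)
    (F : Type) [Field F] [Fintype F] (k : ℕ) (hk : 0 < k) (n : ℕ) (hn : n = 2 * k)
    (hF : Fintype.card F = q ^ n)
    (s t : ℕ)
    (δ : F) (hδ : δ ^ q ^ k = δ)
    (γ : F) (hγ : γ ^ q ^ k = γ)
    (α : F) (hα : α ^ q ^ k = -α)
    (β : F) (hβ : β ^ q ^ k = -β)
    (Tr : F → F) (hTr : ∀ x, Tr x = ∑ i ∈ Finset.range n, x ^ q ^ i) :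
    Function.Bijective
        (fun x : F => α * (x ^ q ^ k + x + δ) ^ t + β * Tr x + γ * x ^ q ^ s) ↔
      γ ≠ 0 :=
  stmt_10_general p e hp q hq F k n hn hF s t δ hδ γ hγ α hα β hβ Tr hTr
end

section
/- Let q be an odd prime power, n a positive integer, g a polynomial over F_{q^n} with g(x)^q = −g(x) for all x ∈ F_{q^n}, L ∈ F_q[x] a linearized polynomial, and β ∈ F_{q^n} with β^q = −β. Then for every δ ∈ F_{q^n}, f(x) = g(x^q + x + δ) + β·Tr(x) + L(x) permutes F_{q^n} if and only if L permutes F_{q^n}. -/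
/-!
Write `q = p ^ e`, `σ x = x ^ q` and `ψ x = σ x + x`. Since `σ` negates `g` and `β`, fixes `Tr`
and commutes with the additive map `L`, the map `f` satisfies `ψ ∘ f = L ∘ ψ`.

If `L` is injective, `f x = f y` forces `ψ (x - y) = 0`, i.e. `σ c = -c` for `c = x - y`; then
`Tr c = Tr (σ c) = -Tr c` vanishes, the `g`-terms agree, and what is left is `L c = 0`.
Conversely, if `f` is onto then `L` maps the finite set `range ψ` onto itself, hence injectively;
as `L` commutes with `ψ`, a zero `w` of `L` has `ψ w = 0`, so `f w = f 0` and `w = 0`.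
-/

open Finset Function

theorem Function.Semiconj.injOn_range_of_surjective {α : Type*} [Finite α] {ψ f L : α → α}
    (h : Semiconj ψ f L) (hf : Surjective f) : Set.InjOn L (Set.range ψ) := by
  have hmaps : Set.MapsTo L (Set.range ψ) (Set.range ψ) := by
    rintro _ ⟨x, rfl⟩
    exact ⟨f x, h x⟩
  have hsurj : Set.SurjOn L (Set.range ψ) (Set.range ψ) := by
    rintro _ ⟨x, rfl⟩
    obtain ⟨y, rfl⟩ := hf x
    exact ⟨ψ y, ⟨y, rfl⟩, (h y).symm⟩
  exact (((Set.toFinite _).surjOn_iff_bijOn_of_mapsTo hmaps).mp hsurj).injOn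

section AntiInvariant

variable {F : Type*} [Field F] (σ : F →+* F) (G : F → F) (T L : F →+ F) (β δ : F)

theorem semiconj_add_self_of_apply_eq_neg (hG : ∀ y, σ (G y) = -G y) (hβ : σ β = -β)
    (hT : ∀ x, σ (T x) = T x) (hL : ∀ x, σ (L x) = L (σ x)) :
    Semiconj (fun x => σ x + x) (fun x => G (σ x + x + δ) + β * T x + L x) L := by
  intro x
  simp only [map_add, map_mul, hG, hβ, hT, hL]
  ring

theorem AddMonoidHom.map_eq_zero_of_apply_eq_neg (hF : ringChar F ≠ 2)
    (hT : ∀ x, T (σ x) = T x) {c : F} (hc : σ c = -c) : T c = 0 := by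
  rw [← Ring.eq_self_iff_eq_zero_of_char_ne_two hF, ← map_neg, ← hc, hT]

theorem bijective_iff_bijective_of_apply_eq_neg [Finite F] (hF : ringChar F ≠ 2)
    (hG : ∀ y, σ (G y) = -G y) (hβ : σ β = -β) (hT : ∀ x, σ (T x) = T x)
    (hTσ : ∀ x, T (σ x) = T x) (hL : ∀ x, σ (L x) = L (σ x)) :
    Bijective (fun x => G (σ x + x + δ) + β * T x + L x) ↔ Bijective L := by
  have hsemi := semiconj_add_self_of_apply_eq_neg σ G T L β δ hG hβ hT hL
  constructor
  · intro hf
    refine Finite.injective_iff_bijective.mp ((injective_iff_map_eq_zero L).mpr fun w hw => ?_)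
    have hψw : σ w + w = 0 := by
      refine hsemi.injOn_range_of_surjective hf.surjective ⟨w, rfl⟩ ⟨0, by simp⟩ ?_
      simp only [map_add, ← hL, hw, map_zero, add_zero]
    have hTw : T w = 0 := T.map_eq_zero_of_apply_eq_neg σ hF hTσ (eq_neg_of_add_eq_zero_left hψw)
    refine hf.injective ?_
    simp only [hψw, hTw, hw, map_zero, add_zero, mul_zero]
  · intro hLb
    refine Finite.injective_iff_bijective.mp fun x y hxy => ?_
    have hψ : σ x + x = σ y + y := hLb.injective <|
      (hsemi x).symm.trans <| (congrArg (fun x => σ x + x) hxy).trans (hsemi y)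
    have hTc : T (x - y) = 0 :=
      T.map_eq_zero_of_apply_eq_neg σ hF hTσ (by rw [map_sub]; linear_combination hψ)
    have hLc : L (x - y) = 0 := by
      simp only [hψ] at hxy
      rw [map_sub] at hTc ⊢
      linear_combination hxy - β * hTc
    exact sub_eq_zero.mp ((injective_iff_map_eq_zero L).mp hLb.injective _ hLc)

end AntiInvariant

section Linearized

variable {F : Type*} [CommSemiring F] (p : ℕ) [ExpChar F p] (e : ℕ)

def linearized {m : ℕ} (a : Fin m → F) : F →+ F where
  toFun x := ∑ i, a i * x ^ (p ^ e) ^ (i : ℕ)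
  map_zero' := sum_eq_zero fun i _ => by
    rw [zero_pow (pow_ne_zero _ (expChar_pow_pos F p e).ne'), mul_zero]
  map_add' x y := by simp only [← pow_mul, add_pow_expChar_pow, mul_add, sum_add_distrib]

theorem linearized_apply {m : ℕ} (a : Fin m → F) (x : F) :
    linearized p e a x = ∑ i, a i * x ^ (p ^ e) ^ (i : ℕ) :=
  rfl

theorem linearized_iterateFrobenius {m : ℕ} {a : Fin m → F}
    (ha : ∀ i, a i ^ p ^ e = a i) (x : F) :
    iterateFrobenius F p e (linearized p e a x) = linearized p e a (iterateFrobenius F p e x) := by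
  simp only [linearized_apply, map_sum, map_mul, iterateFrobenius_def, ha, pow_right_comm x]

theorem iterateFrobenius_sum_range_pow {x : F} {n : ℕ} (hx : x ^ (p ^ e) ^ n = x) :
    iterateFrobenius F p e (∑ i ∈ range n, x ^ (p ^ e) ^ i) = ∑ i ∈ range n, x ^ (p ^ e) ^ i := by
  have hshift (i : ℕ) : (x ^ (p ^ e) ^ i) ^ p ^ e = x ^ (p ^ e) ^ (i + 1) := by
    rw [← pow_mul, pow_succ]
  simp only [map_sum, iterateFrobenius_def, hshift]
  cases n with
  | zero => rfl
  | succ k => rw [sum_range_succ, hx, sum_range_succ' _ k, pow_zero, pow_one]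

end Linearized

theorem stmt_11_general (p e : ℕ) [Fact p.Prime] (hp : p ≠ 2) (q : ℕ) (hq : q = p ^ e)
    (F : Type) [Field F] [Fintype F] (n : ℕ)
    (hF : Fintype.card F = q ^ n)
    (g : Polynomial F) (hg : ∀ x : F, (g.eval x) ^ q = -g.eval x)
    (m : ℕ) (a : Fin m → F) (ha : ∀ i, (a i) ^ q = a i)
    (L : F → F) (hL : ∀ x, L x = ∑ i : Fin m, a i * x ^ q ^ (i : ℕ))
    (β : F) (hβ : β ^ q = -β)
    (Tr : F → F) (hTr : ∀ x, Tr x = ∑ i ∈ Finset.range n, x ^ q ^ i)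
    (δ : F) :
    Function.Bijective (fun x => g.eval (x ^ q + x + δ) + β * Tr x + L x) ↔
      Function.Bijective L := by
  subst hq
  have : CharP F p := charP_of_card_eq_prime_pow (f := e * n) (by rw [hF, pow_mul])
  have hL' : L = linearized p e a := funext hL
  have hTr' : Tr = linearized p e (fun _ : Fin n => (1 : F)) := funext fun x => by
    simp only [hTr, linearized_apply, one_mul, Fin.sum_univ_eq_sum_range (fun i => x ^ (p ^ e) ^ i)]
  have hTfix : ∀ x, iterateFrobenius F p e (Tr x) = Tr x := fun x => by
    rw [hTr]
    exact iterateFrobenius_sum_range_pow p e (by rw [← hF]; exact FiniteField.pow_card x)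
  subst hL' hTr'
  refine bijective_iff_bijective_of_apply_eq_neg (iterateFrobenius F p e) g.eval _ _ β δ
    (by rwa [ringChar.eq F p]) hg hβ hTfix (fun x => ?_)
    (linearized_iterateFrobenius p e ha)
  rw [← linearized_iterateFrobenius p e (fun _ => one_pow _), hTfix]

theorem stmt_11 (p e : ℕ) [Fact p.Prime] (hp : p ≠ 2) (he : 0 < e) (q : ℕ) (hq : q = p ^ e)
    (F : Type) [Field F] [Fintype F] (n : ℕ) (hn : 0 < n)
    (hF : Fintype.card F = q ^ n)
    (g : Polynomial F) (hg : ∀ x : F, (g.eval x) ^ q = -g.eval x)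
    (m : ℕ) (a : Fin m → F) (ha : ∀ i, (a i) ^ q = a i)
    (L : F → F) (hL : ∀ x, L x = ∑ i : Fin m, a i * x ^ q ^ (i : ℕ))
    (β : F) (hβ : β ^ q = -β)
    (Tr : F → F) (hTr : ∀ x, Tr x = ∑ i ∈ Finset.range n, x ^ q ^ i)
    (δ : F) :
    Function.Bijective (fun x => g.eval (x ^ q + x + δ) + β * Tr x + L x) ↔
      Function.Bijective L :=
  stmt_11_general p e hp q hq F n hF g hg m a ha L hL β hβ Tr hTr δ
end

section
/- Let q be a prime power, h a polynomial over F_{q^6}, L a q-polynomial with coefficients in F_q, and δ ∈ F_{q^6}. Then f(x) = h(x^{q^2} − x^q + x + δ)^{q^4} + h(x^{q^2} − x^q + x + δ)^{q^3} − h(x^{q^2} − x^q + x + δ)^q − h(x^{q^2} − x^q + x + δ) permutes F_{q^6} when added to L(x) if and only if L permutes F_{q^6}. -/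
/-!
Let `σ` be the `q`-Frobenius, an additive endomorphism of `F` with `σ ^ 6 = 1`, and
`φ = σ ^ 2 - σ + 1`, so that `φ x = x ^ q ^ 2 - x ^ q + x`. The perturbation is
`f = g ∘ h ∘ (φ + δ)` with `g = σ ^ 4 + σ ^ 3 - σ - 1`, and `φ * g = σ ^ 6 - 1 = 0`, so `φ ∘ f = 0`.
Since `L` has coefficients in `𝔽_q` it commutes with `σ`, hence with `φ`, and therefore
`φ ∘ (f + L) = L ∘ φ`. If `L` is injective, `(f + L) x = (f + L) y` forces `φ x = φ y`, then
`f x = f y` and `L x = L y`. Conversely, if `f + L` is bijective then `L` permutes the finite set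
`φ(F)`, so `L c = 0` gives `φ c = 0`, `f c = f 0` and `(f + L) c = (f + L) 0`.
-/

open Function

namespace AddMonoid.End

variable {A : Type*} [AddCommGroup A] {φ L : AddMonoid.End A} {f : A → A}

theorem apply_apply_of_commute (hφL : Commute φ L) (x : A) : φ (L x) = L (φ x) :=
  DFunLike.congr_fun hφL.eq x

theorem map_add_apply_of_commute (hφL : Commute φ L) (hφf : ∀ x, φ (f x) = 0) (x : A) :
    φ (f x + L x) = L (φ x) := by
  rw [map_add, hφf, zero_add, apply_apply_of_commute hφL]

theorem injective_add_of_injective (hφL : Commute φ L) (hf : ∀ x y, φ x = φ y → f x = f y)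
    (hφf : ∀ x, φ (f x) = 0) (hL : Injective L) : Injective fun x => f x + L x := by
  intro x y hxy
  have hφ : φ x = φ y := hL <| by
    simpa only [map_add_apply_of_commute hφL hφf] using congrArg φ hxy
  exact hL (by simpa only [hf x y hφ, add_right_inj] using hxy)

theorem injective_of_bijective_add [Finite A] (hφL : Commute φ L)
    (hf : ∀ x y, φ x = φ y → f x = f y) (hφf : ∀ x, φ (f x) = 0)
    (hG : Bijective fun x => f x + L x) : Injective L := by
  have hmaps : Set.MapsTo L (Set.range φ) (Set.range φ) := by
    rintro _ ⟨x, rfl⟩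
    exact ⟨f x + L x, map_add_apply_of_commute hφL hφf x⟩
  have hsurj : Set.SurjOn L (Set.range φ) (Set.range φ) := by
    rintro _ ⟨y, rfl⟩
    obtain ⟨x, rfl⟩ := hG.2 y
    exact ⟨φ x, ⟨x, rfl⟩, (map_add_apply_of_commute hφL hφf x).symm⟩
  have hinj : Set.InjOn L (Set.range φ) :=
    ((Set.toFinite _).surjOn_iff_bijOn_of_mapsTo hmaps |>.mp hsurj).injOn
  refine (injective_iff_map_eq_zero L).mpr fun c hc => hG.1 ?_
  have hφc : φ c = φ 0 := hinj ⟨c, rfl⟩ ⟨0, rfl⟩ <| by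
    simp only [← apply_apply_of_commute hφL, hc, map_zero]
  simp only [hf c 0 hφc, hc, map_zero]

theorem bijective_add_iff [Finite A] (hφL : Commute φ L) (hf : ∀ x y, φ x = φ y → f x = f y)
    (hφf : ∀ x, φ (f x) = 0) : Bijective (fun x => f x + L x) ↔ Bijective L := by
  simp only [← Finite.injective_iff_bijective]
  exact ⟨fun hG => injective_of_bijective_add hφL hf hφf (Finite.injective_iff_bijective.mp hG),
    injective_add_of_injective hφL hf hφf⟩

end AddMonoid.End

theorem sq_sub_add_one_mul_eq_pow_six_sub_one {R : Type*} [Ring R] (x : R) :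
    (x ^ 2 - x + 1) * (x ^ 4 + x ^ 3 - x - 1) = x ^ 6 - 1 := by
  noncomm_ring

section Frobenius

variable (R : Type*) [CommRing R] (p e : ℕ) [ExpChar R p]

def frobeniusEnd : AddMonoid.End R := (iterateFrobenius R p e).toAddMonoidHom

variable {R p e}

theorem frobeniusEnd_apply (x : R) : frobeniusEnd R p e x = x ^ p ^ e :=
  iterateFrobenius_def p e x

theorem frobeniusEnd_pow_apply (k : ℕ) (x : R) :
    (frobeniusEnd R p e ^ k) x = x ^ (p ^ e) ^ k := by
  induction k with
  | zero => simp
  | succ k ih =>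
    rw [pow_succ', AddMonoid.End.coe_mul, comp_apply, ih, pow_succ, pow_mul]
    exact iterateFrobenius_def p e _

theorem frobeniusEnd_pow_eq_one {F : Type*} [Field F] [Fintype F] [ExpChar F p] {n : ℕ}
    (hF : Fintype.card F = (p ^ e) ^ n) : frobeniusEnd F p e ^ n = 1 := by
  ext x
  rw [frobeniusEnd_pow_apply, ← hF, FiniteField.pow_card]
  rfl

variable {ι : Type*} (s : Finset ι) {a : ι → R} (k : ι → ℕ)

theorem sum_mulLeft_mul_frobeniusEnd_pow_apply (x : R) :
    (∑ i ∈ s, AddMonoid.End.mulLeft (a i) * frobeniusEnd R p e ^ k i) x =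
      ∑ i ∈ s, a i * x ^ (p ^ e) ^ k i := by
  simp only [← frobeniusEnd_pow_apply]
  exact AddMonoidHom.finsetSum_apply
    (fun i => AddMonoid.End.mulLeft (a i) * frobeniusEnd R p e ^ k i) s x

theorem commute_frobeniusEnd_sum_mulLeft_mul_pow (ha : ∀ i ∈ s, a i ^ p ^ e = a i) :
    Commute (frobeniusEnd R p e)
      (∑ i ∈ s, AddMonoid.End.mulLeft (a i) * frobeniusEnd R p e ^ k i) := by
  refine Commute.sum_right _ _ _ fun i hi => Commute.mul_right ?_ (Commute.self_pow _ _)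
  ext x
  change (a i * x) ^ p ^ e = a i * x ^ p ^ e
  rw [mul_pow, ha i hi]

end Frobenius

theorem stmt_15_general (p e : ℕ) [Fact p.Prime] (q : ℕ) (hq : q = p ^ e)
    (F : Type) [Field F] [Fintype F] (hF : Fintype.card F = q ^ 6)
    (h : Polynomial F) (δ : F)
    (m : ℕ) (a : Fin m → F) (ha : ∀ i, (a i) ^ q = a i)
    (L : F → F) (hL : ∀ x, L x = ∑ i : Fin m, a i * x ^ q ^ (i : ℕ)) :
    Function.Bijective
        (fun x : F =>
          (h.eval (x ^ q ^ 2 - x ^ q + x + δ)) ^ q ^ 4 +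
            (h.eval (x ^ q ^ 2 - x ^ q + x + δ)) ^ q ^ 3 -
            (h.eval (x ^ q ^ 2 - x ^ q + x + δ)) ^ q -
            h.eval (x ^ q ^ 2 - x ^ q + x + δ) + L x) ↔
      Function.Bijective L := by
  subst hq
  have : CharP F p := charP_of_card_eq_prime_pow (f := e * 6) (by rw [hF, pow_mul])
  have : ExpChar F p := ExpChar.prime Fact.out
  set σ := frobeniusEnd F p e
  set Lσ : AddMonoid.End F := ∑ i, AddMonoid.End.mulLeft (a i) * σ ^ (i : ℕ)
  have hLσ : ⇑Lσ = L := funext fun x => by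
    rw [sum_mulLeft_mul_frobeniusEnd_pow_apply, hL]
  set φ : AddMonoid.End F := σ ^ 2 - σ + 1
  set g : AddMonoid.End F := σ ^ 4 + σ ^ 3 - σ - 1
  have hφ (x : F) : φ x = x ^ (p ^ e) ^ 2 - x ^ p ^ e + x := by
    change (σ ^ 2) x - σ x + x = _
    rw [frobeniusEnd_pow_apply, frobeniusEnd_apply]
  have hg (y : F) : g y = y ^ (p ^ e) ^ 4 + y ^ (p ^ e) ^ 3 - y ^ p ^ e - y := by
    change (σ ^ 4) y + (σ ^ 3) y - σ y - y = _
    rw [frobeniusEnd_pow_apply, frobeniusEnd_pow_apply, frobeniusEnd_apply]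
  have hφL : Commute φ Lσ :=
    have hσL := commute_frobeniusEnd_sum_mulLeft_mul_pow _ _ fun i _ => ha i
    ((hσL.pow_left 2).sub_left hσL).add_left (Commute.one_left _)
  have hφg : φ * g = 0 := by
    rw [sq_sub_add_one_mul_eq_pow_six_sub_one, frobeniusEnd_pow_eq_one hF, sub_self]
  have key := AddMonoid.End.bijective_add_iff hφL (f := fun x => g (h.eval (φ x + δ)))
    (fun x y hxy => by rw [hxy]) (fun x => DFunLike.congr_fun hφg _)
  simpa only [hφ, hg, hLσ] using key

theorem stmt_15 (p e : ℕ) [Fact p.Prime] (he : 0 < e) (q : ℕ) (hq : q = p ^ e)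
    (F : Type) [Field F] [Fintype F] (hF : Fintype.card F = q ^ 6)
    (h : Polynomial F) (δ : F)
    (m : ℕ) (a : Fin m → F) (ha : ∀ i, (a i) ^ q = a i)
    (L : F → F) (hL : ∀ x, L x = ∑ i : Fin m, a i * x ^ q ^ (i : ℕ)) :
    Function.Bijective
        (fun x : F =>
          (h.eval (x ^ q ^ 2 - x ^ q + x + δ)) ^ q ^ 4 +
            (h.eval (x ^ q ^ 2 - x ^ q + x + δ)) ^ q ^ 3 -
            (h.eval (x ^ q ^ 2 - x ^ q + x + δ)) ^ q -
            h.eval (x ^ q ^ 2 - x ^ q + x + δ) + L x) ↔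
      Function.Bijective L :=
  stmt_15_general p e q hq F hF h δ m a ha L hL
end

section
/- Let q be a prime power, h a polynomial over F_{q^6}, L a q-polynomial over F_q, and δ ∈ F_{q^6}. Then f(x) = h(x^{q^2}+x^q+x+δ)^{q^4} − h(x^{q^2}+x^q+x+δ)^{q^3} + h(x^{q^2}+x^q+x+δ)^q − h(x^{q^2}+x^q+x+δ) + L(x) permutes F_{q^6} if and only if L permutes F_{q^6}. -/
/-
Let φ be the additive endomorphism x ↦ x ^ q of F, so φ ^ 6 = 1, and put S = φ² + φ + 1 and
Ψ = φ⁴ - φ³ + φ - 1; then f = Ψ ∘ h ∘ (S + δ) + L. Since S Ψ = φ⁶ - 1 = 0 and L commutes with φ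
(its coefficients lie in F_q), S ∘ f = L ∘ S. If L is injective, f x = f y gives S x = S y, so the
Ψ-terms agree and L x = L y. If f is bijective, L maps S(F) onto itself, hence injectively, so
every w ∈ ker L has S w = 0; then f w = f 0 and w = 0.
-/

open Function Set

theorem AddMonoid.End.bijective_comp_add_iff {M : Type*} [AddCommGroup M] [Finite M]
    {S Ψ L : AddMonoid.End M} (hSΨ : S * Ψ = 0) (hSL : Commute S L) (g : M → M) :
    Bijective (fun x => Ψ (g (S x)) + L x) ↔ Bijective L := by
  replace hSΨ : ∀ y, S (Ψ y) = 0 := DFunLike.congr_fun hSΨ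
  replace hSL : ∀ x, S (L x) = L (S x) := DFunLike.congr_fun hSL.eq
  set f := fun x => Ψ (g (S x)) + L x
  have hSf : ∀ x, S (f x) = L (S x) := fun x => by simp only [f, map_add, hSΨ, hSL, zero_add]
  rw [← Finite.injective_iff_bijective, ← Finite.injective_iff_bijective]
  constructor
  · intro hf
    have hL_maps : MapsTo L (range S) (range S) := by
      rintro _ ⟨x, rfl⟩
      exact ⟨f x, hSf x⟩
    have hL_surj : SurjOn L (range S) (range S) := by
      rintro _ ⟨x, rfl⟩
      obtain ⟨y, rfl⟩ := Finite.injective_iff_surjective.mp hf x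
      exact ⟨S y, mem_range_self y, (hSf y).symm⟩
    have hL_range : InjOn L (range S) :=
      ((toFinite _).surjOn_iff_bijOn_of_mapsTo hL_maps).mp hL_surj |>.injOn
    refine (injective_iff_map_eq_zero L).mpr fun w hw => ?_
    have hSw : S w = 0 := hL_range (mem_range_self w) ⟨0, map_zero S⟩ (by
      rw [← hSL, hw, map_zero, map_zero])
    exact hf (by simp only [f, hw, hSw, map_zero])
  · intro hL x y hxy
    have hS : S x = S y := hL (by rw [← hSf, ← hSf, hxy])
    exact hL (add_left_cancel (by simpa only [f, hS] using hxy))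

theorem sq_add_add_one_mul_eq_pow_six_sub_one {A : Type*} [Ring A] (x : A) :
    (x ^ 2 + x + 1) * (x ^ 4 - x ^ 3 + x - 1) = x ^ 6 - 1 := by
  noncomm_ring

theorem iterate_iterateFrobenius_apply (R : Type*) [CommSemiring R] (p : ℕ) [ExpChar R p]
    (e k : ℕ) (x : R) : (iterateFrobenius R p e)^[k] x = x ^ (p ^ e) ^ k := by
  rw [← iterateFrobenius_mul_apply, iterateFrobenius_def, pow_mul]

theorem stmt_16_general (p e : ℕ) [Fact p.Prime] (q : ℕ) (hq : q = p ^ e)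
    (F : Type) [Field F] [Fintype F] (hF : Fintype.card F = q ^ 6)
    (h : Polynomial F) (δ : F)
    (m : ℕ) (a : Fin m → F) (ha : ∀ i, (a i) ^ q = a i)
    (L : F → F) (hL : ∀ x, L x = ∑ i : Fin m, a i * x ^ q ^ (i : ℕ)) :
    Function.Bijective
        (fun x : F =>
          (h.eval (x ^ q ^ 2 + x ^ q + x + δ)) ^ q ^ 4 -
            (h.eval (x ^ q ^ 2 + x ^ q + x + δ)) ^ q ^ 3 +
            (h.eval (x ^ q ^ 2 + x ^ q + x + δ)) ^ q -
            h.eval (x ^ q ^ 2 + x ^ q + x + δ) + L x) ↔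
      Function.Bijective L := by
  subst hq
  have : CharP F p := charP_of_card_eq_prime_pow (f := e * 6) (by rw [hF, pow_mul])
  let σ := iterateFrobenius F p e
  let φ : AddMonoid.End F := σ.toAddMonoidHom
  have hφ : ∀ k x, (φ ^ k) x = x ^ (p ^ e) ^ k := iterate_iterateFrobenius_apply F p e
  have hφ6 : φ ^ 6 = 1 := AddMonoid.End.ext _ fun x => by
    rw [hφ, ← hF, FiniteField.pow_card]; rfl
  let Lφ : AddMonoid.End F := ∑ i, AddMonoid.End.mulLeft (a i) * φ ^ (i : ℕ)
  have hLφ : ⇑Lφ = L := funext fun x => by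
    rw [hL]
    refine (AddMonoidHom.finsetSum_apply _ _ _).trans ?_
    exact Finset.sum_congr rfl fun i _ => congrArg (a i * ·) (hφ i x)
  have hφLφ : Commute φ Lφ := by
    refine Commute.sum_right _ _ _ fun i _ => Commute.mul_right ?_ ((Commute.refl φ).pow_right _)
    refine AddMonoid.End.ext _ fun x => ?_
    change σ (a i * x) = a i * σ x
    rw [map_mul, iterateFrobenius_def, ha]
  let S : AddMonoid.End F := φ ^ 2 + φ + 1
  let Ψ : AddMonoid.End F := φ ^ 4 - φ ^ 3 + φ - 1
  have hSΨ : S * Ψ = 0 := by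
    rw [sq_add_add_one_mul_eq_pow_six_sub_one, hφ6, sub_self]
  have hSL : Commute S Lφ := ((hφLφ.pow_left 2).add_left hφLφ).add_left (Commute.one_left _)
  have key := AddMonoid.End.bijective_comp_add_iff hSΨ hSL (fun y => h.eval (y + δ))
  rw [← hLφ]
  convert key using 3 with x
  have hS : S x = (φ ^ 2) x + φ x + x := rfl
  have hΨ : ∀ y, Ψ y = (φ ^ 4) y - (φ ^ 3) y + φ y - y := fun _ => rfl
  have hφ₁ : ∀ y, φ y = y ^ p ^ e := fun _ => rfl
  simp only [hS, hΨ, hφ, hφ₁]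

theorem stmt_16 (p e : ℕ) [Fact p.Prime] (he : 0 < e) (q : ℕ) (hq : q = p ^ e)
    (F : Type) [Field F] [Fintype F] (hF : Fintype.card F = q ^ 6)
    (h : Polynomial F) (δ : F)
    (m : ℕ) (a : Fin m → F) (ha : ∀ i, (a i) ^ q = a i)
    (L : F → F) (hL : ∀ x, L x = ∑ i : Fin m, a i * x ^ q ^ (i : ℕ)) :
    Function.Bijective
        (fun x : F =>
          (h.eval (x ^ q ^ 2 + x ^ q + x + δ)) ^ q ^ 4 -
            (h.eval (x ^ q ^ 2 + x ^ q + x + δ)) ^ q ^ 3 +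
            (h.eval (x ^ q ^ 2 + x ^ q + x + δ)) ^ q -
            h.eval (x ^ q ^ 2 + x ^ q + x + δ) + L x) ↔
      Function.Bijective L :=
  stmt_16_general p e q hq F hF h δ m a ha L hL
end

section
/- Let q be an odd prime power, n, k positive integers, a, b, δ ∈ F_{q^n} with ab ≠ 0. Then the polynomial f(x) = (a·x^{q^k} − b·x + δ)^{(q^n+1)/2} + a·x^{q^k} + b·x is a permutation polynomial of F_{q^n} if and only if ab is a nonzero square in F_{q^n}. -/
theorem stmt_17 (p e : ℕ) [Fact p.Prime] (hp : p ≠ 2) (he : 0 < e) (q : ℕ) (hq : q = p ^ e)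
    (F : Type) [Field F] [Fintype F] (n : ℕ) (hn : 0 < n) (k : ℕ) (hk : 0 < k)
    (hF : Fintype.card F = q ^ n)
    (a b δ : F) (hab : a * b ≠ 0) :
    Function.Bijective
        (fun x : F =>
          (a * x ^ q ^ k - b * x + δ) ^ ((q ^ n + 1) / 2) + a * x ^ q ^ k + b * x) ↔
      IsSquare (a * b) := by
  subst hq
  have hpp := (Fact.out : p.Prime)
  have ha : a ≠ 0 := left_ne_zero_of_mul hab
  have hb : b ≠ 0 := right_ne_zero_of_mul hab
  have hQk : (p ^ e) ^ k = p ^ (e * k) := (pow_mul p e k).symm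
  have hQn : (p ^ e) ^ n = p ^ (e * n) := (pow_mul p e n).symm
  simp only [hQk, hQn]
  have hcard : Fintype.card F = p ^ (e * n) := by rw [hF, hQn]
  have hrc : ringChar F = p := by
    obtain ⟨m, hprime, hcard'⟩ := FiniteField.card F (ringChar F)
    have hdvd : ringChar F ∣ p ^ (e * n) := by
      rw [← hcard, hcard']
      exact dvd_pow_self _ (by positivity)
    exact (Nat.prime_dvd_prime_iff_eq hprime hpp).mp (hprime.dvd_of_dvd_pow hdvd)
  have hchar2 : ringChar F ≠ 2 := by rw [hrc]; exact hp
  haveI hP : CharP F p := hrc ▸ ringChar.charP F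
  have h2 : (2 : F) ≠ 0 := Ring.two_ne_zero hchar2
  have hodd : Fintype.card F % 2 = 1 := FiniteField.odd_card_of_char_ne_two hchar2
  have hN1 : 1 < Fintype.card F := Fintype.one_lt_card
  set N := Fintype.card F with hNdef
  have hexp : (p ^ (e * n) + 1) / 2 = N / 2 + 1 := by
    rw [← hcard]; omega
  -- powers of squares and nonsquares
  have psq : ∀ y : F, IsSquare y → y ^ (N / 2 + 1) = y := by
    rintro y ⟨z, rfl⟩
    rcases eq_or_ne z 0 with rfl | hz
    · simp
    · have h1 : z ^ (N - 1) = 1 := FiniteField.pow_card_sub_one_eq_one z hz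
      have hstep : (z * z) ^ (N / 2 + 1) = z ^ (N - 1) * (z * z) := by
        rw [← sq z, ← pow_mul, ← pow_add]
        congr 1
        omega
      rw [hstep, h1, one_mul]
  have pns : ∀ y : F, ¬ IsSquare y → y ^ (N / 2 + 1) = -y := by
    intro y hy
    have hy0 : y ≠ 0 := by rintro rfl; exact hy ⟨0, by simp⟩
    rcases FiniteField.pow_dichotomy hchar2 hy0 with h | h
    · exact absurd ((FiniteField.isSquare_iff hchar2 hy0).mpr h) hy
    · rw [pow_succ, h]; ring
  -- Frobenius injectivity
  have frobinj : ∀ x y : F, x ^ p ^ (e * k) = y ^ p ^ (e * k) → x = y := by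
    intro x y hxy
    have hz : (x - y) ^ p ^ (e * k) = 0 := by
      rw [sub_pow_char_pow, hxy, sub_self]
    exact sub_eq_zero.mp ((pow_eq_zero_iff (pow_pos hpp.pos (e * k)).ne').mp hz)
  -- multiplicativity of squareness
  have msq : ∀ y z : F, y ≠ 0 → z ≠ 0 → (IsSquare (y * z) ↔ (IsSquare y ↔ IsSquare z)) := by
    intro y z hy hz
    have hm : (y * z) ^ (N / 2) = y ^ (N / 2) * z ^ (N / 2) := mul_pow _ _ _
    have hne : (-1 : F) ≠ 1 := Ring.neg_one_ne_one_of_char_ne_two hchar2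
    rw [FiniteField.isSquare_iff hchar2 hy, FiniteField.isSquare_iff hchar2 hz,
      FiniteField.isSquare_iff hchar2 (mul_ne_zero hy hz), hm]
    rcases FiniteField.pow_dichotomy hchar2 hy with h1 | h1 <;>
      rcases FiniteField.pow_dichotomy hchar2 hz with h2 | h2 <;>
      rw [h1, h2] <;> simp [hne, hne.symm]
  -- t^(Q+1) is a square
  have tsq : ∀ t : F, IsSquare (t ^ (p ^ (e * k) + 1)) := by
    intro t
    obtain ⟨s, hs⟩ : Odd (p ^ (e * k)) := (hpp.odd_of_ne_two hp).pow
    exact ⟨t ^ (s + 1), by rw [← pow_add]; congr 1; omega⟩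
  set g : F → F := fun x => a * x ^ p ^ (e * k) - b * x + δ with hg
  set f : F → F := fun x =>
      (a * x ^ p ^ (e * k) - b * x + δ) ^ ((p ^ (e * n) + 1) / 2)
        + a * x ^ p ^ (e * k) + b * x with hf
  have key1 : ∀ x, IsSquare (g x) → f x = 2 * (a * x ^ p ^ (e * k)) + δ := by
    intro x hx
    have hpow := psq (g x) hx
    simp only [hg, hf, hexp] at hpow ⊢
    rw [hpow]; ring
  have key2 : ∀ x, ¬ IsSquare (g x) → f x = 2 * (b * x) - δ := by
    intro x hx
    have hpow := pns (g x) hx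
    simp only [hg, hf, hexp] at hpow ⊢
    rw [hpow]; ring
  constructor
  · -- bijective → IsSquare (a*b)
    intro hbij
    by_contra hns
    have hex : ∃ x1 : F, g x1 ≠ 0 := by
      by_contra hall
      push_neg at hall
      have h0 : δ = 0 := by
        have h := hall 0
        simpa [hg, zero_pow (pow_pos hpp.pos (e * k)).ne'] using h
      have h1 : a = b := by
        have h := hall 1
        simp only [hg, one_pow, mul_one, h0, add_zero] at h
        linear_combination h
      exact hns (h1 ▸ ⟨a, rfl⟩)
    obtain ⟨x1, hg1⟩ := hex
    set t : F := g x1 * b⁻¹ with ht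
    have htne : t ≠ 0 := mul_ne_zero hg1 (inv_ne_zero hb)
    have hy1 : g x1 = b * t := by rw [ht]; field_simp
    have hy1' : a * x1 ^ p ^ (e * k) - b * x1 + δ = b * t := hy1
    set x2 : F := x1 + t with hx2
    have hy2 : g x2 = a * t ^ p ^ (e * k) := by
      show a * (x1 + t) ^ p ^ (e * k) - b * (x1 + t) + δ = a * t ^ p ^ (e * k)
      rw [add_pow_char_pow]
      linear_combination hy1'
    have hy2ne : g x2 ≠ 0 := by
      rw [hy2]; exact mul_ne_zero ha (pow_ne_zero _ htne)
    have hprod : g x1 * g x2 = (a * b) * t ^ (p ^ (e * k) + 1) := by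
      rw [hy1, hy2, pow_succ]; ring
    have hprodns : ¬ IsSquare (g x1 * g x2) := by
      rw [hprod]
      intro hsq
      obtain ⟨s, hs⟩ := tsq t
      rw [hs] at hsq
      obtain ⟨z, hz⟩ := hsq
      have hsne : s ≠ 0 := by
        intro h
        rw [h, mul_zero] at hs
        exact pow_ne_zero _ htne hs
      apply hns
      refine ⟨z * s⁻¹, ?_⟩
      field_simp
      linear_combination hz
    have hx12 : x1 ≠ x2 := by
      intro h
      rw [hx2] at h
      exact htne (left_eq_add.mp h)
    have hval : 2 * (b * x2) - δ = 2 * (a * x1 ^ p ^ (e * k)) + δ := by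
      rw [hx2, mul_add, ← hy1']
      ring
    have hiffneg : ¬ (IsSquare (g x1) ↔ IsSquare (g x2)) :=
      fun h => hprodns ((msq _ _ hg1 hy2ne).mpr h)
    by_cases s1 : IsSquare (g x1)
    · have s2 : ¬ IsSquare (g x2) := fun h => hiffneg ⟨fun _ => h, fun _ => s1⟩
      have e1 := key1 x1 s1
      have e2 := key2 x2 s2
      have : f x1 = f x2 := by rw [e1, e2, hval]
      exact hx12 (hbij.injective this)
    · have s2 : IsSquare (g x2) := by
        by_contra h
        exact hiffneg ⟨fun h1 => absurd h1 s1, fun h2 => absurd h2 h⟩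
      obtain ⟨x, hx⟩ := hbij.surjective (2 * (a * x1 ^ p ^ (e * k)) + δ)
      by_cases sx : IsSquare (g x)
      · rw [key1 x sx] at hx
        have hxq : x ^ p ^ (e * k) = x1 ^ p ^ (e * k) :=
          mul_left_cancel₀ (mul_ne_zero h2 ha) (by linear_combination hx)
        have := frobinj x x1 hxq
        subst this
        exact s1 sx
      · rw [key2 x sx] at hx
        have hxx2 : x = x2 :=
          mul_left_cancel₀ (mul_ne_zero h2 hb) (by linear_combination hx - hval)
        subst hxx2
        exact sx s2
  · -- IsSquare (a*b) → bijective
    intro hsq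
    rw [Finite.injective_iff_bijective.symm]
    intro x1 x2 hxx
    change f x1 = f x2 at hxx
    by_cases s1 : IsSquare (g x1) <;> by_cases s2 : IsSquare (g x2)
    · rw [key1 x1 s1, key1 x2 s2] at hxx
      exact frobinj x1 x2 (mul_left_cancel₀ (mul_ne_zero h2 ha) (by linear_combination hxx))
    · rw [key1 x1 s1, key2 x2 s2] at hxx
      set t : F := x2 - x1 with ht
      have habx : a * x1 ^ p ^ (e * k) = b * x2 - δ :=
        mul_left_cancel₀ h2 (by linear_combination hxx)
      have hy1 : g x1 = b * t := by
        show a * x1 ^ p ^ (e * k) - b * x1 + δ = b * t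
        rw [ht]; linear_combination habx
      have hy2 : g x2 = a * t ^ p ^ (e * k) := by
        show a * x2 ^ p ^ (e * k) - b * x2 + δ = a * t ^ p ^ (e * k)
        rw [ht, sub_pow_char_pow]
        linear_combination habx
      rcases eq_or_ne t 0 with h0 | htne
      · rw [ht] at h0; exact (sub_eq_zero.mp h0).symm
      · exfalso
        have hg1 : g x1 ≠ 0 := by rw [hy1]; exact mul_ne_zero hb htne
        have hg2 : g x2 ≠ 0 := by rw [hy2]; exact mul_ne_zero ha (pow_ne_zero _ htne)
        have hprod : g x1 * g x2 = (a * b) * t ^ (p ^ (e * k) + 1) := by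
          rw [hy1, hy2, pow_succ]; ring
        have hsq2 : IsSquare (g x1 * g x2) := by rw [hprod]; exact hsq.mul (tsq t)
        rw [msq _ _ hg1 hg2] at hsq2
        exact s2 (hsq2.mp s1)
    · rw [key2 x1 s1, key1 x2 s2] at hxx
      set t : F := x1 - x2 with ht
      have habx : a * x2 ^ p ^ (e * k) = b * x1 - δ :=
        mul_left_cancel₀ h2 (by linear_combination -hxx)
      have hy1 : g x2 = b * t := by
        show a * x2 ^ p ^ (e * k) - b * x2 + δ = b * t
        rw [ht]; linear_combination habx
      have hy2 : g x1 = a * t ^ p ^ (e * k) := by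
        show a * x1 ^ p ^ (e * k) - b * x1 + δ = a * t ^ p ^ (e * k)
        rw [ht, sub_pow_char_pow]
        linear_combination habx
      rcases eq_or_ne t 0 with h0 | htne
      · rw [ht] at h0; exact sub_eq_zero.mp h0
      · exfalso
        have hg2' : g x2 ≠ 0 := by rw [hy1]; exact mul_ne_zero hb htne
        have hg1' : g x1 ≠ 0 := by rw [hy2]; exact mul_ne_zero ha (pow_ne_zero _ htne)
        have hprod : g x2 * g x1 = (a * b) * t ^ (p ^ (e * k) + 1) := by
          rw [hy1, hy2, pow_succ]; ring
        have hsq2 : IsSquare (g x2 * g x1) := by rw [hprod]; exact hsq.mul (tsq t)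
        rw [msq _ _ hg2' hg1'] at hsq2
        exact s1 (hsq2.mp s2)
    · rw [key2 x1 s1, key2 x2 s2] at hxx
      exact mul_left_cancel₀ (mul_ne_zero h2 hb) (by linear_combination hxx)
end
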